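/- Directional stability of the composed quantile map, discrete case (step of Proposition A.3): Let R > 0, N ≥ 1, d ≥ 1, and let x₁, …, x_N, y₁, …, y_N be points of the closed ball B̄(0,R) ⊆ ℝ^d. Let P = (1/N)·Σ_{i=1}^N δ_{x_i} and Q = (1/N)·Σ_{i=1}^N δ_{y_i}. Then for all unit vectors u, v ∈ S^{d−1}: ∫_{−R}^{R} |F_{Q,v}^{-1}(F_{P,u}(x)) − F_{Q,v}^{-1}(F_{P,v}(x))| dx ≤ 4R²·‖u − v‖₂. -/

import Mathlib

/-!
Write `ε = R‖u - v‖`. On the ball, `|⟪u, z⟫ - ⟪v, z⟫| ≤ ε`, so the projected CDFs satisfy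
`F_{P,v}(t - ε) ≤ F_{P,u}(t) ≤ F_{P,v}(t + ε)`. Composing with the monotone quantile
`F_{Q,v}⁻¹`, the integrand is squeezed between `g(t - ε)` and `g(t + ε)` for the monotone
function `g = F_{Q,v}⁻¹ ∘ F_{P,v}`, which takes values in `[-R, R]`. After a change of variables
`∫_{-R}^{R} (g(t + ε) - g(t - ε)) dt` telescopes to `∫_{R-ε}^{R+ε} g - ∫_{-R-ε}^{-R+ε} g ≤ 4Rε`.
-/

open MeasureTheory Set

/-- The unit sphere `S^{d-1}` in `ℝ^d`. -/
def sph (d : ℕ) : Set (EuclideanSpace ℝ (Fin d)) :=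
  Metric.sphere (0 : EuclideanSpace ℝ (Fin d)) 1

/-- CDF of the projection of `μ` onto direction `u`. -/
noncomputable def projCDF {d : ℕ} (μ : Measure (EuclideanSpace ℝ (Fin d)))
    (u : EuclideanSpace ℝ (Fin d)) (x : ℝ) : ℝ :=
  (μ {y | (inner ℝ u y : ℝ) ≤ x}).toReal

/-- Quantile function of the projection of `μ` onto direction `u`:
`F_{μ,u}^{-1}(t) = inf {x ∈ [-R,R] : F_{μ,u}(x) ≥ t}`. -/
noncomputable def projQuantile {d : ℕ} (R : ℝ) (μ : Measure (EuclideanSpace ℝ (Fin d)))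
    (u : EuclideanSpace ℝ (Fin d)) (t : ℝ) : ℝ :=
  sInf {x : ℝ | x ∈ Set.Icc (-R) R ∧ t ≤ projCDF μ u x}

/-- Topological support of a measure on `ℝ`. -/
def msupp (μ : Measure ℝ) : Set ℝ := {x | ∀ ε > (0 : ℝ), 0 < μ (Metric.ball x ε)}

open scoped ENNReal RealInnerProductSpace

theorem intervalIntegral_abs_sub_le_of_monotone_sandwich {a b m M ε : ℝ} (hab : a ≤ b)
    (hε : 0 ≤ ε) {f g : ℝ → ℝ} (hf : Monotone f) (hg : Monotone g) (hgm : ∀ t, g t ∈ Icc m M)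
    (hlow : ∀ t, g (t - ε) ≤ f t) (hhigh : ∀ t, f t ≤ g (t + ε)) :
    ∫ t in a..b, |f t - g t| ≤ 2 * ε * (M - m) := by
  have hgi : ∀ c d : ℝ, IntervalIntegrable g volume c d := fun _ _ => hg.intervalIntegrable
  have hplus : Monotone fun t => g (t + ε) := fun _ _ h => hg (by linarith)
  have hminus : Monotone fun t => g (t - ε) := fun _ _ h => hg (by linarith)
  have hpoint : ∀ t, |f t - g t| ≤ g (t + ε) - g (t - ε) := fun t => by
    have := hg (show t - ε ≤ t by linarith)
    have := hg (show t ≤ t + ε by linarith)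
    rw [abs_sub_le_iff]
    constructor <;> linarith [hlow t, hhigh t]
  have hwindow : ∀ c, ∫ t in (c - ε)..(c + ε), g t ∈ Icc (2 * ε * m) (2 * ε * M) := fun c => by
    have hle : c - ε ≤ c + ε := by linarith
    have hlo := intervalIntegral.integral_mono_on hle intervalIntegrable_const (hgi _ _)
      fun t _ => (hgm t).1
    have hhi := intervalIntegral.integral_mono_on hle (hgi _ _) intervalIntegrable_const
      fun t _ => (hgm t).2
    simp only [intervalIntegral.integral_const, smul_eq_mul] at hlo hhi
    constructor <;> linarith
  calc ∫ t in a..b, |f t - g t| ≤ ∫ t in a..b, (g (t + ε) - g (t - ε)) :=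
        intervalIntegral.integral_mono_on hab ((hf.intervalIntegrable.sub hg.intervalIntegrable).abs)
          (hplus.intervalIntegrable.sub hminus.intervalIntegrable) fun t _ => hpoint t
    _ = (∫ t in (a + ε)..(b + ε), g t) - ∫ t in (a - ε)..(b - ε), g t := by
        rw [intervalIntegral.integral_sub hplus.intervalIntegrable hminus.intervalIntegrable,
          intervalIntegral.integral_comp_add_right g ε,
          intervalIntegral.integral_comp_sub_right g ε]
    _ = (∫ t in (b - ε)..(b + ε), g t) - ∫ t in (a - ε)..(a + ε), g t :=
        intervalIntegral.integral_interval_sub_interval_comm' (hgi _ _) (hgi _ _) (hgi _ _)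
    _ ≤ 2 * ε * (M - m) := by linarith [(hwindow b).2, (hwindow a).1]

section ProjectedCDF

variable {d : ℕ} {μ : Measure (EuclideanSpace ℝ (Fin d))}

theorem projCDF_le_projCDF_of_ae [IsFiniteMeasure μ] {u v : EuclideanSpace ℝ (Fin d)}
    {s t : ℝ} (h : ∀ᵐ z ∂μ, ⟪u, z⟫ ≤ s → ⟪v, z⟫ ≤ t) : projCDF μ u s ≤ projCDF μ v t :=
  ENNReal.toReal_mono (measure_ne_top _ _) (measure_mono_ae h)

theorem projCDF_monotone [IsFiniteMeasure μ] (u : EuclideanSpace ℝ (Fin d)) :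
    Monotone (projCDF μ u) := fun _ _ hst =>
  projCDF_le_projCDF_of_ae (ae_of_all _ fun _ hz => hz.trans hst)

theorem projCDF_le_one [IsProbabilityMeasure μ] (u : EuclideanSpace ℝ (Fin d)) (t : ℝ) :
    projCDF μ u t ≤ 1 :=
  ENNReal.toReal_le_of_le_ofReal zero_le_one (by simpa using prob_le_one)

theorem projCDF_eq_one_of_ae [IsProbabilityMeasure μ] {u : EuclideanSpace ℝ (Fin d)} {t : ℝ}
    (h : ∀ᵐ z ∂μ, ⟪u, z⟫ ≤ t) : projCDF μ u t = 1 := by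
  have hmeas : MeasurableSet {z : EuclideanSpace ℝ (Fin d) | ⟪u, z⟫ ≤ t} :=
    measurableSet_le (by fun_prop) measurable_const
  rw [projCDF, (ae_iff_measure_eq hmeas.nullMeasurableSet).1 h, measure_univ, ENNReal.toReal_one]

variable {R : ℝ}

theorem projCDF_radius_eq_one [IsProbabilityMeasure μ] (hμ : ∀ᵐ z ∂μ, ‖z‖ ≤ R)
    {v : EuclideanSpace ℝ (Fin d)} (hv : ‖v‖ ≤ 1) : projCDF μ v R = 1 :=
  projCDF_eq_one_of_ae <| hμ.mono fun z hz =>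
    (real_inner_le_norm v z).trans ((mul_le_of_le_one_left (norm_nonneg z) hv).trans hz)

theorem projCDF_sub_le_projCDF [IsFiniteMeasure μ] (hμ : ∀ᵐ z ∂μ, ‖z‖ ≤ R)
    (u v : EuclideanSpace ℝ (Fin d)) (t : ℝ) :
    projCDF μ v (t - R * ‖u - v‖) ≤ projCDF μ u t := by
  refine projCDF_le_projCDF_of_ae (hμ.mono fun z hz hvz => ?_)
  have : ⟪u, z⟫ - ⟪v, z⟫ ≤ R * ‖u - v‖ :=
    calc ⟪u, z⟫ - ⟪v, z⟫ = ⟪u - v, z⟫ := (inner_sub_left u v z).symm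
      _ ≤ ‖u - v‖ * ‖z‖ := real_inner_le_norm _ _
      _ ≤ R * ‖u - v‖ := by rw [mul_comm]; exact mul_le_mul_of_nonneg_right hz (norm_nonneg _)
  linarith

theorem projCDF_le_projCDF_add [IsFiniteMeasure μ] (hμ : ∀ᵐ z ∂μ, ‖z‖ ≤ R)
    (u v : EuclideanSpace ℝ (Fin d)) (t : ℝ) :
    projCDF μ u t ≤ projCDF μ v (t + R * ‖u - v‖) := by
  have := projCDF_sub_le_projCDF hμ v u (t + R * ‖u - v‖)
  rwa [norm_sub_rev v u, add_sub_cancel_right] at this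

theorem projQuantile_mem_Icc (hR : 0 ≤ R) {u : EuclideanSpace ℝ (Fin d)} {t : ℝ}
    (ht : t ≤ projCDF μ u R) : projQuantile R μ u t ∈ Icc (-R) R := by
  have hRmem : R ∈ {x | x ∈ Icc (-R) R ∧ t ≤ projCDF μ u x} := ⟨⟨by linarith, le_rfl⟩, ht⟩
  exact ⟨le_csInf ⟨R, hRmem⟩ fun _ hx => hx.1.1, csInf_le ⟨-R, fun _ hx => hx.1.1⟩ hRmem⟩

theorem projQuantile_mono (hR : 0 ≤ R) {u : EuclideanSpace ℝ (Fin d)} {s t : ℝ} (hst : s ≤ t)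
    (ht : t ≤ projCDF μ u R) : projQuantile R μ u s ≤ projQuantile R μ u t :=
  csInf_le_csInf ⟨-R, fun _ hx => hx.1.1⟩ ⟨R, ⟨by linarith, le_rfl⟩, ht⟩
    fun _ hx => ⟨hx.1, hst.trans hx.2⟩

end ProjectedCDF

theorem integral_abs_projQuantile_comp_projCDF_sub_le {d : ℕ} {R : ℝ} (hR : 0 ≤ R)
    {P Q : Measure (EuclideanSpace ℝ (Fin d))} [IsProbabilityMeasure P] [IsProbabilityMeasure Q]
    (hP : ∀ᵐ z ∂P, ‖z‖ ≤ R) (hQ : ∀ᵐ z ∂Q, ‖z‖ ≤ R) (u : EuclideanSpace ℝ (Fin d))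
    {v : EuclideanSpace ℝ (Fin d)} (hv : ‖v‖ ≤ 1) :
    ∫ t in (-R)..R,
        |projQuantile R Q v (projCDF P u t) - projQuantile R Q v (projCDF P v t)| ≤
      4 * R ^ 2 * ‖u - v‖ := by
  have hQR := projCDF_radius_eq_one hQ hv
  have hq_mono : ∀ {s t}, s ≤ t → t ≤ 1 → projQuantile R Q v s ≤ projQuantile R Q v t :=
    fun hst ht => projQuantile_mono hR hst (ht.trans hQR.ge)
  calc _ ≤ 2 * (R * ‖u - v‖) * (R - -R) :=
        intervalIntegral_abs_sub_le_of_monotone_sandwich (by linarith) (by positivity)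
          (fun _ _ hst => hq_mono (projCDF_monotone u hst) (projCDF_le_one u _))
          (fun _ _ hst => hq_mono (projCDF_monotone v hst) (projCDF_le_one v _))
          (fun _ => projQuantile_mem_Icc hR ((projCDF_le_one v _).trans hQR.ge))
          (fun t => hq_mono (projCDF_sub_le_projCDF hP u v t) (projCDF_le_one u t))
          (fun t => hq_mono (projCDF_le_projCDF_add hP u v t) (projCDF_le_one v _))
    _ = 4 * R ^ 2 * ‖u - v‖ := by ring

theorem isProbabilityMeasure_smul_sum_dirac {α : Type*} [MeasurableSpace α] {N : ℕ}
    (hN : N ≠ 0) (z : Fin N → α) :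
    IsProbabilityMeasure ((N : ℝ≥0∞)⁻¹ • ∑ i, Measure.dirac (z i)) :=
  ⟨by simp [ENNReal.inv_mul_cancel (Nat.cast_ne_zero.2 hN) (ENNReal.natCast_ne_top N)]⟩

theorem ae_smul_sum_dirac {α ι : Type*} [MeasurableSpace α] [MeasurableSingletonClass α]
    [Fintype ι] {z : ι → α} {s : Set α} (h : ∀ i, z i ∈ s) (c : ℝ≥0∞) :
    ∀ᵐ a ∂(c • ∑ i, Measure.dirac (z i)), a ∈ s := by
  refine Measure.ae_smul_measure ?_ c
  rw [← Measure.sum_fintype, Measure.ae_sum_iff]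
  intro i
  rw [ae_dirac_eq]
  exact h i

theorem composed_quantile_directional_stability_discrete_general
    (d : ℕ) (R : ℝ) (hR : 0 < R) (N : ℕ) (hN : 1 ≤ N)
    (x y : Fin N → EuclideanSpace ℝ (Fin d))
    (hx : ∀ i, x i ∈ Metric.closedBall (0 : EuclideanSpace ℝ (Fin d)) R)
    (hy : ∀ i, y i ∈ Metric.closedBall (0 : EuclideanSpace ℝ (Fin d)) R)
    (P Q : Measure (EuclideanSpace ℝ (Fin d)))
    (hP : P = (N : ENNReal)⁻¹ • ∑ i : Fin N, Measure.dirac (x i))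
    (hQ : Q = (N : ENNReal)⁻¹ • ∑ i : Fin N, Measure.dirac (y i)) :
    ∀ u ∈ sph d, ∀ v ∈ sph d,
      ∫ t in (-R)..R,
          |projQuantile R Q v (projCDF P u t) - projQuantile R Q v (projCDF P v t)| ≤
        4 * R ^ 2 * ‖u - v‖ := by
  intro u _ v hv
  have hN0 : N ≠ 0 := Nat.one_le_iff_ne_zero.mp hN
  subst hP hQ
  have := isProbabilityMeasure_smul_sum_dirac hN0 x
  have := isProbabilityMeasure_smul_sum_dirac hN0 y
  exact integral_abs_projQuantile_comp_projCDF_sub_le hR.le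
    ((ae_smul_sum_dirac hx _).mono fun _ => mem_closedBall_zero_iff.mp)
    ((ae_smul_sum_dirac hy _).mono fun _ => mem_closedBall_zero_iff.mp) u
    (mem_sphere_zero_iff_norm.mp hv).le

/-- Directional stability of the composed quantile map, discrete case. -/
theorem composed_quantile_directional_stability_discrete
    (d : ℕ) (hd : 1 ≤ d) (R : ℝ) (hR : 0 < R) (N : ℕ) (hN : 1 ≤ N)
    (x y : Fin N → EuclideanSpace ℝ (Fin d))
    (hx : ∀ i, x i ∈ Metric.closedBall (0 : EuclideanSpace ℝ (Fin d)) R)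
    (hy : ∀ i, y i ∈ Metric.closedBall (0 : EuclideanSpace ℝ (Fin d)) R)
    (P Q : Measure (EuclideanSpace ℝ (Fin d)))
    (hP : P = (N : ENNReal)⁻¹ • ∑ i : Fin N, Measure.dirac (x i))
    (hQ : Q = (N : ENNReal)⁻¹ • ∑ i : Fin N, Measure.dirac (y i)) :
    ∀ u ∈ sph d, ∀ v ∈ sph d,
      ∫ t in (-R)..R,
          |projQuantile R Q v (projCDF P u t) - projQuantile R Q v (projCDF P v t)| ≤
        4 * R ^ 2 * ‖u - v‖ :=
  composed_quantile_directional_stability_discrete_general d R hR N hN x y hx hy P Q hP hQ
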